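/- arXiv:1503.00521 — 2 statements merged into one kernel-verified Lean document; each statement's English description precedes it below -/
import Mathlib

section
/- Let a ∈ S, t ≥ 0, E ∈ F_t and s ≥ t. Then for every index i ∈ {1,…,M}, P_a(E ∩ {ω : ω(s) = i}) = Σ_{j=1}^{M} P_a(E ∩ {ω : ω(t) = j}) (e^{−(s−t)Λ})_{j i}; that is, the push-forward of the restricted measure P_a ↾ E under the evaluation ω ↦ ω(s) equals the push-forward under ω ↦ ω(t) multiplied on the right by the stochastic matrix e^{−(s−t)Λ}. -/
open MeasureTheory Matrix Filter Set Topology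

noncomputable section

/-- A path `f : ℝ → E` is cadlag (on `[0,∞)`): right-continuous at every `t ≥ 0`
and with left limits at every `t > 0`. -/
def IsCadlag {E : Type*} [TopologicalSpace E] (f : ℝ → E) : Prop :=
  (∀ t : ℝ, 0 ≤ t → ContinuousWithinAt f (Set.Ici t) t) ∧
  (∀ t : ℝ, 0 < t → ∃ l : E, Filter.Tendsto f (nhdsWithin t (Set.Ico 0 t)) (nhds l))

/-- The space `D` of cadlag paths with values in `{1,…,M}`. -/
def PathD (M : ℕ) : Type := {ω : ℝ → Fin M // IsCadlag ω}

/-- The σ-algebra `F_t`, generated by the cylinders with times `≤ t`. -/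
def Ft (M : ℕ) (t : ℝ) : MeasurableSpace (PathD M) :=
  MeasurableSpace.generateFrom
    {S | ∃ s : ℝ, 0 ≤ s ∧ s ≤ t ∧ ∃ j : Fin M, S = {ω : PathD M | ω.1 s = j}}

/-- The σ-algebra `F` on `D`, generated by the cylinders. -/
instance (M : ℕ) : MeasurableSpace (PathD M) :=
  MeasurableSpace.generateFrom
    {S | ∃ s : ℝ, 0 ≤ s ∧ ∃ j : Fin M, S = {ω : PathD M | ω.1 s = j}}

/-- The simplex `S` of probability vectors of `ℝ^M`. -/
def probSimplex (M : ℕ) : Set (Fin M → ℝ) := {a | (∀ i, 0 ≤ a i) ∧ ∑ i, a i = 1}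

/-- The matrix exponential `e^{-tΛ}`. -/
def mExp {M : ℕ} (Λ : Matrix (Fin M) (Fin M) ℝ) (t : ℝ) : Matrix (Fin M) (Fin M) ℝ :=
  NormedSpace.exp (-(t • Λ))

/-- The coupling matrix assumptions (H4), (H5): nonpositive off-diagonal entries,
rows summing to zero. -/
def CouplingOK {M : ℕ} (Λ : Matrix (Fin M) (Fin M) ℝ) : Prop :=
  (∀ i j, i ≠ j → Λ i j ≤ 0) ∧ (∀ i, ∑ j, Λ i j = 0)

/-- Irreducibility (H6). -/
def IrreducibleM {M : ℕ} (Λ : Matrix (Fin M) (Fin M) ℝ) : Prop :=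
  ∀ I : Finset (Fin M), I.Nonempty → I ≠ Finset.univ → ∃ i ∈ I, ∃ j ∉ I, Λ i j ≠ 0

/-- `μ` gives every cylinder `C(t₀,…,t_k; j₀,…,j_k)` the mass prescribed by the
matrix-exponential formula with initial distribution `a`. -/
def CylFormula {M : ℕ} (Λ : Matrix (Fin M) (Fin M) ℝ) (a : Fin M → ℝ)
    (μ : Measure (PathD M)) : Prop :=
  ∀ (k : ℕ) (t : Fin (k + 1) → ℝ) (j : Fin (k + 1) → Fin M), 0 ≤ t 0 → StrictMono t →
    (μ {ω : PathD M | ∀ l, ω.1 (t l) = j l}).toReal =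
      (a ᵥ* mExp Λ (t 0)) (j 0) *
        ∏ l : Fin k, mExp Λ (t l.succ - t l.castSucc) (j l.castSucc) (j l.succ)

/-- The family `a ↦ P_a` of probability measures induced by the coupling matrix. -/
def PFamily {M : ℕ} (Λ : Matrix (Fin M) (Fin M) ℝ)
    (P : (Fin M → ℝ) → Measure (PathD M)) : Prop :=
  ∀ a ∈ probSimplex M, IsProbabilityMeasure (P a) ∧ CylFormula Λ a (P a)

/-- The flat torus `𝕋^N`. -/
abbrev Torus (N : ℕ) := Fin N → AddCircle (1 : ℝ)

/-- Projection of `ℝ^N` onto the torus. -/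
def projT (N : ℕ) (x : Fin N → ℝ) : Torus N := fun i => (x i : AddCircle (1 : ℝ))

/-- `I(ξ)(t) = proj (∫_0^t ξ(s) ds)`. -/
def pathI (N : ℕ) (ξ : ℝ → Fin N → ℝ) (t : ℝ) : Torus N :=
  projT N (∫ s in (0:ℝ)..t, ξ s)

/-- Standing assumptions (H1)-(H3) on the Hamiltonians: continuity, convexity and
superlinearity in the momentum variable. -/
def HamHyp {M N : ℕ} (H : Fin M → Torus N → (Fin N → ℝ) → ℝ) : Prop :=
  ∀ i, (Continuous fun p : Torus N × (Fin N → ℝ) => H i p.1 p.2) ∧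
    (∀ x, ConvexOn ℝ Set.univ (H i x)) ∧
    (∀ x, ∀ c : ℝ, ∃ b : ℝ, ∀ p : Fin N → ℝ, c * ‖p‖ - b ≤ H i x p)

/-- The Lagrangians, obtained by Legendre-Fenchel duality. -/
def Lag {M N : ℕ} (H : Fin M → Torus N → (Fin N → ℝ) → ℝ) (i : Fin M) (x : Torus N)
    (q : Fin N → ℝ) : ℝ := ⨆ p : Fin N → ℝ, (p ⬝ᵥ q - H i x p)

/-- Subsolution of the weakly coupled system (HJα): a Lipschitz `u : 𝕋^N → ℝ^M` whose
(periodic lift) satisfies `H_i(x, Du_i) + Λ^i · u ≤ α` a.e. for each `i`. -/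
def IsSubsol {M N : ℕ} (H : Fin M → Torus N → (Fin N → ℝ) → ℝ)
    (Λ : Matrix (Fin M) (Fin M) ℝ) (α : ℝ) (u : Torus N → Fin M → ℝ) : Prop :=
  (∃ K : NNReal, ∀ i, LipschitzWith K fun x => u x i) ∧
  ∀ i : Fin M, ∀ᵐ x ∂(volume : Measure (Fin N → ℝ)),
    DifferentiableAt ℝ (fun y => u (projT N y) i) x ∧
    H i (projT N x) (fun j => fderiv ℝ (fun y => u (projT N y) i) x (Pi.single j 1)) +
      ∑ k, Λ i k * u (projT N x) k ≤ α

/-- The space `D(0,∞;ℝ^N)` of cadlag paths valued in `ℝ^N`. -/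
def PathR (N : ℕ) : Type := {ξ : ℝ → Fin N → ℝ // IsCadlag ξ}

/-- σ-algebra on `D(0,∞;ℝ^N)` generated by the evaluation maps. -/
instance (N : ℕ) : MeasurableSpace (PathR N) :=
  MeasurableSpace.generateFrom
    {S | ∃ t : ℝ, 0 ≤ t ∧ ∃ B : Set (Fin N → ℝ), MeasurableSet B ∧
      S = {ξ : PathR N | ξ.1 t ∈ B}}

/-- A property holds almost surely if it holds `P_a`-a.e. for every positive
probability vector `a`. -/
def ASurely {M : ℕ} (P : (Fin M → ℝ) → Measure (PathD M)) (Q : PathD M → Prop) : Prop :=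
  ∀ a ∈ probSimplex M, (∀ i, 0 < a i) → ∀ᵐ ω ∂(P a), Q ω

/-- An admissible control: measurable, locally (in time) bounded, nonanticipating. -/
def IsControl {M N : ℕ} (P : (Fin M → ℝ) → Measure (PathD M))
    (Ξ : PathD M → PathR N) : Prop :=
  Measurable Ξ ∧
  (∀ t : ℝ, 0 < t → ∃ R : ℝ, 0 < R ∧
    ASurely P fun ω => ∀ s ∈ Set.Icc (0:ℝ) t, ‖(Ξ ω).1 s‖ < R) ∧
  (∀ t : ℝ, 0 < t → ∀ ω₁ ω₂ : PathD M, (∀ s ∈ Set.Icc (0:ℝ) t, ω₁.1 s = ω₂.1 s) →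
    ∀ s ∈ Set.Icc (0:ℝ) t, (Ξ ω₁).1 s = (Ξ ω₂).1 s)

/-- A stopping time adapted to the filtration `F_t`. -/
def IsStopT {M : ℕ} (τ : PathD M → ℝ) : Prop :=
  (∀ ω, 0 ≤ τ ω) ∧ ∀ t : ℝ, 0 ≤ t → MeasurableSet[Ft M t] {ω | τ ω ≤ t}

/-- The class `K(τ, z)` of controls steering (a.s.) the random curve to `z` at time `τ`. -/
def Kset {M N : ℕ} (P : (Fin M → ℝ) → Measure (PathD M)) (τ : PathD M → ℝ)
    (z : Torus N) : Set (PathD M → PathR N) :=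
  {Ξ | IsControl P Ξ ∧ ASurely P fun ω => pathI N ((Ξ ω).1) (τ ω) = z}

/-- The value function given by the representation formula (5.1). -/
def valFun {M N : ℕ} (H : Fin M → Torus N → (Fin N → ℝ) → ℝ)
    (P : (Fin M → ℝ) → Measure (PathD M)) (α : ℝ) (y : Torus N) (b : Fin M → ℝ)
    (i : Fin M) (x : Torus N) : ℝ :=
  sInf {r : ℝ | ∃ τ : PathD M → ℝ, IsStopT τ ∧ (∃ T : ℝ, ∀ ω, τ ω ≤ T) ∧
    ∃ Ξ ∈ Kset P τ (y - x),
      r = ∫ ω, ((∫ s in (0:ℝ)..(τ ω),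
            (Lag H (ω.1 s) (x + pathI N ((Ξ ω).1) s) (-(Ξ ω).1 s) + α)) +
          b (ω.1 (τ ω))) ∂(P (Pi.single i 1))}

/-- Skorohod convergence in `D(0,∞;ℝ^N)`. -/
def SkTendsto {N : ℕ} (ξn : ℕ → ℝ → Fin N → ℝ) (ξ : ℝ → Fin N → ℝ) : Prop :=
  ∃ g : ℕ → ℝ → ℝ,
    (∀ n, ContinuousOn (g n) (Set.Ici 0) ∧ StrictMonoOn (g n) (Set.Ici 0) ∧
      g n '' Set.Ici 0 = Set.Ici 0) ∧
    TendstoUniformlyOn (fun n s => g n s) id Filter.atTop (Set.Ici 0) ∧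
    ∀ T : ℝ, 0 < T →
      TendstoUniformlyOn (fun n s => ξn n (g n s)) ξ Filter.atTop (Set.Icc 0 T)

/-- A control piecewise constant in `[0,t]`. -/
def PiecewiseConstControl {M N : ℕ} (Ξ : PathD M → PathR N) (t : ℝ) : Prop :=
  ∃ (m : ℕ) (s : Fin (m + 1) → ℝ), StrictMono s ∧ s 0 = 0 ∧ s (Fin.last m) = t ∧
    ∃ X : Fin m → PathD M → (Fin N → ℝ),
      (∀ k, Measurable[Ft M (s k.castSucc)] (X k) ∧ ∃ C : ℝ, ∀ ω, ‖X k ω‖ ≤ C) ∧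
      ∀ ω (k : Fin m), ∀ r ∈ Set.Ico (s k.castSucc) (s k.succ), (Ξ ω).1 r = X k ω

/-- Shifting a cadlag path by `h ≥ 0` yields a cadlag path. -/
theorem IsCadlag.shift {E : Type*} [TopologicalSpace E] {f : ℝ → E} (hf : IsCadlag f)
    {h : ℝ} (hh : 0 ≤ h) : IsCadlag fun s => f (s + h) := by
  constructor
  · intro t ht
    have h1 : ContinuousWithinAt f (Set.Ici (t + h)) (t + h) := hf.1 (t + h) (by linarith)
    have h2 : ContinuousWithinAt (fun s : ℝ => s + h) (Set.Ici t) t :=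
      (continuous_add_right h).continuousWithinAt
    have hm : Set.MapsTo (fun s : ℝ => s + h) (Set.Ici t) (Set.Ici (t + h)) := by
      intro s hs
      simp only [Set.mem_Ici] at hs ⊢
      linarith
    exact ContinuousWithinAt.comp (g := f) (f := fun s : ℝ => s + h)
      (t := Set.Ici (t + h)) h1 h2 hm
  · intro t ht
    obtain ⟨l, hl⟩ := hf.2 (t + h) (by linarith)
    refine ⟨l, hl.comp ?_⟩
    apply tendsto_nhdsWithin_of_tendsto_nhds_of_eventually_within
    · exact ((continuous_add_right h).tendsto t).mono_left nhdsWithin_le_nhds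
    · filter_upwards [self_mem_nhdsWithin] with s hs
      obtain ⟨hs0, hst⟩ := hs
      exact ⟨by linarith, by linarith⟩

/-- The shift flow `φ_h` on `D`. -/
def shiftD {M : ℕ} (h : ℝ) (hh : 0 ≤ h) (ω : PathD M) : PathD M :=
  ⟨fun s => ω.1 (s + h), ω.2.shift hh⟩


/-- A (right) stochastic matrix: nonnegative entries, each row summing to 1. -/
def IsStochasticM {M : ℕ} (B : Matrix (Fin M) (Fin M) ℝ) : Prop :=
  (∀ i j, 0 ≤ B i j) ∧ ∀ i, ∑ j, B i j = 1

end

/-!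
Fix `i`. As functions of `E`, both sides are finite signed measures on `F_t`, so it suffices
that they agree on `D` and on the π-system of finite cylinders with times in `[0, t]`, which
generates `F_t`. On `D` this is the semigroup law `e^{-tΛ} e^{-(s-t)Λ} = e^{-sΛ}`. On a cylinder
whose last time is `m ≤ t`, the cylinder formula shows that adding a constraint `ω(v) = i` at a
time `v ≥ m` multiplies the mass by the entry `(e^{-(v-m)Λ})_{c(m) i}`, and the semigroup law
again matches the two sides.
-/

theorem mExp_zero {M : ℕ} (Λ : Matrix (Fin M) (Fin M) ℝ) : mExp Λ 0 = 1 := by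
  simp [mExp]

theorem mExp_mul_mExp {M : ℕ} (Λ : Matrix (Fin M) (Fin M) ℝ) (u v : ℝ) :
    mExp Λ u * mExp Λ v = mExp Λ (u + v) := by
  rw [mExp, mExp, mExp, ← Matrix.exp_add_of_commute, add_smul, neg_add]
  exact (((Commute.refl Λ).smul_left u).smul_right v).neg_left.neg_right

theorem MeasureTheory.Measure.measureReal_inter_eq_sum_of_generateFrom {Ω κ : Type*}
    [Fintype κ] {m m0 : MeasurableSpace Ω} (hm : m ≤ m0) {μ : Measure[m0] Ω}
    [IsFiniteMeasure μ] {G : Set (Set Ω)} (hgen : m = MeasurableSpace.generateFrom G)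
    (hG : IsPiSystem G)
    (A : Set Ω) (B : κ → Set Ω) (w : κ → ℝ)
    (hbase : ∀ E ∈ G, μ.real (E ∩ A) = ∑ j, μ.real (E ∩ B j) * w j)
    (huniv : μ.real A = ∑ j, μ.real (B j) * w j)
    {E : Set Ω} (hE : MeasurableSet[m] E) :
    μ.real (E ∩ A) = ∑ j, μ.real (E ∩ B j) * w j := by
  set ν : Set Ω → @SignedMeasure Ω m := fun C => ((μ.restrict C).trim hm).toSignedMeasure
  have hν : ∀ C F, MeasurableSet[m] F → ν C F = μ.real (F ∩ C) := fun C F hF => by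
    simp only [ν, toSignedMeasure_apply_measurable hF, measureReal_def,
      trim_measurableSet_eq hm hF, Measure.restrict_apply (hm F hF)]
  have hsum : ∀ F, MeasurableSet[m] F →
      (∑ j, w j • ν (B j)) F = ∑ j, μ.real (F ∩ B j) * w j :=
    fun F hF => by simp [hν _ F hF, mul_comm]
  have key : ν A = ∑ j, w j • ν (B j) := by
    refine VectorMeasure.ext_of_generateFrom G (fun F hF => ?_) hgen hG ?_
    · have hFm : MeasurableSet[m] F := hgen ▸ MeasurableSpace.measurableSet_generateFrom hF
      rw [hν _ F hFm, hsum F hFm, hbase F hF]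
    · rw [hν _ _ MeasurableSet.univ, hsum _ MeasurableSet.univ]
      simpa using huniv
  rw [← hν A E hE, key, hsum E hE]

namespace PathD

variable {M : ℕ}

theorem measurableSet_eval_eq {u : ℝ} (hu : 0 ≤ u) (j : Fin M) :
    MeasurableSet {ω : PathD M | ω.1 u = j} :=
  MeasurableSpace.measurableSet_generateFrom ⟨u, hu, j, rfl⟩

theorem Ft_le (t : ℝ) : Ft M t ≤ (inferInstance : MeasurableSpace (PathD M)) :=
  MeasurableSpace.generateFrom_le fun _ ⟨_, hu, _, j, hS⟩ => hS ▸ measurableSet_eval_eq hu j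

def finCyl (T : Finset ℝ) (c : ℝ → Fin M) : Set (PathD M) := {ω | ∀ x ∈ T, ω.1 x = c x}

theorem finCyl_union (T₁ T₂ : Finset ℝ) (c : ℝ → Fin M) :
    finCyl (T₁ ∪ T₂) c = finCyl T₁ c ∩ finCyl T₂ c := by
  ext ω
  simp only [finCyl, Finset.mem_union, or_imp, forall_and, Set.mem_inter_iff,
    Set.mem_ofPred_eq]

theorem finCyl_eq_of_mem {T : Finset ℝ} {c : ℝ → Fin M} {ω : PathD M}
    (hω : ω ∈ finCyl T c) :
    finCyl T c = finCyl T ω.1 := by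
  ext ω'
  exact forall₂_congr fun x hx => by rw [hω x hx]

def cylinders (M : ℕ) (t : ℝ) : Set (Set (PathD M)) :=
  {S | ∃ T : Finset ℝ, T.Nonempty ∧ (∀ x ∈ T, 0 ≤ x ∧ x ≤ t) ∧
    ∃ c, S = finCyl T c}

theorem isPiSystem_cylinders (t : ℝ) : IsPiSystem (cylinders M t) := by
  rintro _ ⟨T₁, hT₁, hT₁t, c₁, rfl⟩ _ ⟨T₂, -, hT₂t, c₂, rfl⟩
    ⟨ω, hω₁, hω₂⟩
  refine ⟨T₁ ∪ T₂, hT₁.mono Finset.subset_union_left, ?_, ω.1, ?_⟩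
  · exact fun x hx => (Finset.mem_union.1 hx).elim (hT₁t x) (hT₂t x)
  · rw [finCyl_union, finCyl_eq_of_mem hω₁, finCyl_eq_of_mem hω₂]

theorem Ft_eq_generateFrom_cylinders (t : ℝ) :
    Ft M t = MeasurableSpace.generateFrom (cylinders M t) := by
  refine le_antisymm (MeasurableSpace.generateFrom_le ?_) (MeasurableSpace.generateFrom_le ?_)
  · rintro _ ⟨u, hu0, hut, j, rfl⟩
    refine MeasurableSpace.measurableSet_generateFrom
      ⟨{u}, Finset.singleton_nonempty u, by simpa using ⟨hu0, hut⟩, fun _ => j, ?_⟩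
    ext ω
    simp [finCyl]
  · rintro _ ⟨T, -, hTt, c, rfl⟩
    have : finCyl T c = ⋂ x ∈ T, {ω : PathD M | ω.1 x = c x} := by
      ext ω
      simp [finCyl]
    rw [this]
    exact Finset.measurableSet_biInter T fun x hx =>
      MeasurableSpace.measurableSet_generateFrom ⟨x, (hTt x hx).1, (hTt x hx).2, c x, rfl⟩

end PathD

namespace CylFormula

open PathD

variable {M : ℕ} {Λ : Matrix (Fin M) (Fin M) ℝ} {a : Fin M → ℝ} {μ : Measure (PathD M)}

theorem measureReal_eval_eq (hcyl : CylFormula Λ a μ) {u : ℝ} (hu : 0 ≤ u) (j : Fin M) :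
    μ.real {ω : PathD M | ω.1 u = j} = (a ᵥ* mExp Λ u) j := by
  rw [measureReal_def]
  simpa using hcyl 0 (fun _ => u) (fun _ => j) hu (Fin.strictMono_iff_lt_succ.2 fun l => l.elim0)

theorem measureReal_eval_eq_sum (hcyl : CylFormula Λ a μ) {t s : ℝ} (ht : 0 ≤ t)
    (hts : t ≤ s) (i : Fin M) :
    μ.real {ω : PathD M | ω.1 s = i} =
      ∑ j, μ.real {ω : PathD M | ω.1 t = j} * mExp Λ (s - t) j i := by
  simp only [hcyl.measureReal_eval_eq (ht.trans hts), hcyl.measureReal_eval_eq ht]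
  rw [← add_sub_cancel t s, ← mExp_mul_mExp, ← vecMul_vecMul, add_sub_cancel_left]
  rfl

theorem measureReal_inter_eval_of_lt (hcyl : CylFormula Λ a μ) {k : ℕ} {u : Fin (k + 1) → ℝ}
    (hu0 : 0 ≤ u 0) (hu : StrictMono u) (j : Fin (k + 1) → Fin M) {v : ℝ}
    (hv : u (Fin.last k) < v) (i : Fin M) :
    μ.real ({ω : PathD M | ∀ l, ω.1 (u l) = j l} ∩ {ω | ω.1 v = i}) =
      μ.real {ω : PathD M | ∀ l, ω.1 (u l) = j l} *
        mExp Λ (v - u (Fin.last k)) (j (Fin.last k)) i := by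
  have hsnoc : StrictMono (Fin.snoc u v : Fin (k + 2) → ℝ) := by
    simpa only [Fin.insertNth_last'] using Fin.strictMono_insertNth_last hu v hv
  have hset : {ω : PathD M | ∀ l, ω.1 ((Fin.snoc u v : Fin (k + 2) → ℝ) l) =
        (Fin.snoc j i : Fin (k + 2) → Fin M) l} =
      {ω : PathD M | ∀ l, ω.1 (u l) = j l} ∩ {ω | ω.1 v = i} := by
    ext ω
    simp [Fin.forall_fin_succ']
  have hext := hcyl (k + 1) (Fin.snoc u v) (Fin.snoc j i) (by simpa using hu0) hsnoc
  rw [hset, Fin.prod_univ_castSucc] at hext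
  simp only [Fin.succ_castSucc, Fin.succ_last, ← Fin.castSucc_zero, Fin.snoc_castSucc,
    Fin.snoc_last] at hext
  rw [measureReal_def, hext, measureReal_def, hcyl k u j hu0 hu, mul_assoc]

theorem measureReal_finCyl_inter_eval (hcyl : CylFormula Λ a μ) {T : Finset ℝ} (hT : T.Nonempty)
    (hT0 : ∀ x ∈ T, 0 ≤ x) (c : ℝ → Fin M) {v : ℝ} (hv : T.max' hT ≤ v) (i : Fin M) :
    μ.real (finCyl T c ∩ {ω | ω.1 v = i}) =
      μ.real (finCyl T c) * mExp Λ (v - T.max' hT) (c (T.max' hT)) i := by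
  set m := T.max' hT
  -- `CylFormula` only speaks about strictly increasing times, so `v = m` is treated apart.
  rcases hv.eq_or_lt with rfl | hmv
  · have hsub : finCyl T c ⊆ {ω | ω.1 m = c m} := fun ω hω => hω m (T.max'_mem hT)
    rw [sub_self, mExp_zero, Matrix.one_apply]
    split_ifs with hci
    · rw [← hci, Set.inter_eq_left.2 hsub, mul_one]
    · rw [mul_zero, Set.disjoint_iff_inter_eq_empty.1, measureReal_empty]
      exact Set.disjoint_of_subset_left hsub
        (Set.disjoint_left.2 fun ω h₁ h₂ => hci (h₁.symm.trans h₂))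
  · obtain ⟨k, hk⟩ : ∃ k, T.card = k + 1 := Nat.exists_eq_add_one.2 (Finset.card_pos.2 hT)
    set u := T.orderEmbOfFin hk
    have hlast : u (Fin.last k) = m := T.orderEmbOfFin_last hk k.succ_pos
    have hfin : finCyl T c = {ω | ∀ l, ω.1 (u l) = c (u l)} := by
      ext ω
      refine ⟨fun h l => h _ (T.orderEmbOfFin_mem hk l), fun h x hx => ?_⟩
      obtain ⟨l, rfl⟩ : x ∈ Set.range u := by rwa [Finset.range_orderEmbOfFin]
      exact h l
    rw [hfin, ← hlast]
    exact hcyl.measureReal_inter_eval_of_lt (hT0 _ (T.orderEmbOfFin_mem hk 0)) u.strictMono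
      (c ∘ u) (hlast ▸ hmv) i

theorem measureReal_inter_eval_eq_sum_of_mem_cylinders (hcyl : CylFormula Λ a μ) {t s : ℝ}
    (hts : t ≤ s) {E : Set (PathD M)} (hE : E ∈ cylinders M t) (i : Fin M) :
    μ.real (E ∩ {ω | ω.1 s = i}) =
      ∑ j, μ.real (E ∩ {ω | ω.1 t = j}) * mExp Λ (s - t) j i := by
  obtain ⟨T, hT, hTt, c, rfl⟩ := hE
  have hT0 : ∀ x ∈ T, 0 ≤ x := fun x hx => (hTt x hx).1
  have hmt : T.max' hT ≤ t := (hTt _ (T.max'_mem hT)).2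
  simp only [hcyl.measureReal_finCyl_inter_eval hT hT0 c hmt,
    hcyl.measureReal_finCyl_inter_eval hT hT0 c (hmt.trans hts), mul_assoc, ← Finset.mul_sum]
  rw [← Matrix.mul_apply, mExp_mul_mExp, sub_add_sub_cancel']

end CylFormula

theorem stmt2_general {M : ℕ} (Λ : Matrix (Fin M) (Fin M) ℝ)
    (P : (Fin M → ℝ) → MeasureTheory.Measure (PathD M)) (hP : PFamily Λ P)
    (a : Fin M → ℝ) (ha : a ∈ probSimplex M) (t s : ℝ) (ht : 0 ≤ t) (hts : t ≤ s)
    (E : Set (PathD M)) (hE : MeasurableSet[Ft M t] E) :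
    ∀ i : Fin M, (P a (E ∩ {ω : PathD M | ω.1 s = i})).toReal =
      ∑ j : Fin M, (P a (E ∩ {ω : PathD M | ω.1 t = j})).toReal * mExp Λ (s - t) j i := by
  intro i
  obtain ⟨hprob, hcyl⟩ := hP a ha
  exact Measure.measureReal_inter_eq_sum_of_generateFrom (PathD.Ft_le t)
    (PathD.Ft_eq_generateFrom_cylinders t) (PathD.isPiSystem_cylinders t) _ _ _
    (fun F hF => hcyl.measureReal_inter_eval_eq_sum_of_mem_cylinders hts hF i)
    (hcyl.measureReal_eval_eq_sum ht hts i) hE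

/-- For `E ∈ F_t` and `s ≥ t`, the push-forward of `P_a ↾ E` under the
evaluation at time `s` is the push-forward under the evaluation at time `t` multiplied on
the right by the stochastic matrix `e^{-(s-t)Λ}`. -/
theorem stmt2 {M : ℕ} (Λ : Matrix (Fin M) (Fin M) ℝ) (hΛ : CouplingOK Λ)
    (P : (Fin M → ℝ) → MeasureTheory.Measure (PathD M)) (hP : PFamily Λ P)
    (a : Fin M → ℝ) (ha : a ∈ probSimplex M) (t s : ℝ) (ht : 0 ≤ t) (hts : t ≤ s)
    (E : Set (PathD M)) (hE : MeasurableSet[Ft M t] E) :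
    ∀ i : Fin M, (P a (E ∩ {ω : PathD M | ω.1 s = i})).toReal =
      ∑ j : Fin M, (P a (E ∩ {ω : PathD M | ω.1 t = j})).toReal * mExp Λ (s - t) j i :=
  stmt2_general Λ P hP a ha t s ht hts E hE
end

section
/- For any control Ξ and any t > 0, there exists a sequence of controls Ξ_n, each piecewise constant in [0,t], which is locally in time uniformly bounded (for every T > 0 there is R > 0 with sup_{[0,T]}|Ξ_n(ω)| < R for all n, a.s.) and such that Ξ_n(ω) converges to Ξ(ω) in the Skorohod sense for every ω ∈ D. -/
open MeasureTheory Matrix Filter Set Topology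

/-!
A cadlag path `ξ` admits, for every `ε > 0`, a partition `0 = τ₀ < ⋯ < τₘ = t` on whose
cells `[τᵢ, τᵢ₊₁)` it oscillates by at most `ε`. The `n`-th control samples `Ξ ω` on the
grid `(t / 2ⁿ) ℤ` before time `t`, truncated at norm `n` so that the samples are bounded for
every `ω` and not only almost surely, and equals `Ξ ω` from time `t` on. Once the mesh `t / 2ⁿ`
is below every cell length, the piecewise linear time change sending each `τᵢ` to the grid
point just above it moves time by less than the mesh, and the grid sample read at the changed
time lies in the same cell as the original time: this is Skorohod convergence. The sample at a
grid time `θ` is `F_θ`-measurable because, by nonanticipation, it only depends on the path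
stopped at `θ`.
-/

section Grid

variable {h u v : ℝ}

noncomputable def gridFloor (h u : ℝ) : ℝ := h * ⌊u / h⌋

noncomputable def gridCeil (h u : ℝ) : ℝ := h * ⌈u / h⌉

lemma gridFloor_le (hh : 0 < h) : gridFloor h u ≤ u := by
  simpa [gridFloor, le_div_iff₀' hh] using Int.floor_le (u / h)

lemma lt_gridFloor_add (hh : 0 < h) : u < gridFloor h u + h := by
  have := Int.lt_floor_add_one (u / h)
  rw [div_lt_iff₀' hh] at this
  simpa [gridFloor, mul_add] using this

lemma gridFloor_nonneg (hh : 0 < h) (hu : 0 ≤ u) : 0 ≤ gridFloor h u :=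
  mul_nonneg hh.le (by exact_mod_cast Int.floor_nonneg.2 (div_nonneg hu hh.le))

lemma le_gridFloor (hh : 0 < h) {k : ℤ} (hk : h * k ≤ u) : h * k ≤ gridFloor h u :=
  mul_le_mul_of_nonneg_left (Int.cast_le.2 (Int.le_floor.2 ((le_div_iff₀' hh).2 hk))) hh.le

lemma gridFloor_eq (hh : 0 < h) {k : ℤ} (hu : u ∈ Ico (h * k) (h * k + h)) :
    gridFloor h u = h * k := by
  have : ⌊u / h⌋ = k := by
    rw [Int.floor_eq_iff, le_div_iff₀' hh, div_lt_iff₀' hh, mul_add, mul_one]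
    exact hu
  rw [gridFloor, this]

lemma le_gridCeil (hh : 0 < h) : u ≤ gridCeil h u := by
  simpa [gridCeil, div_le_iff₀' hh] using Int.le_ceil (u / h)

lemma gridCeil_lt_add (hh : 0 < h) : gridCeil h u < u + h := by
  have := mul_lt_mul_of_pos_left (Int.ceil_lt_add_one (u / h)) hh
  rwa [mul_add, mul_div_cancel₀ _ hh.ne', mul_one] at this

lemma gridCeil_le (hh : 0 < h) {k : ℤ} (hk : u ≤ h * k) : gridCeil h u ≤ h * k :=
  mul_le_mul_of_nonneg_left (Int.cast_le.2 (Int.ceil_le.2 ((div_le_iff₀' hh).2 hk))) hh.le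

lemma gridCeil_mul_intCast (hh : 0 < h) (k : ℤ) : gridCeil h (h * k) = h * k :=
  (gridCeil_le hh le_rfl).antisymm (le_gridCeil hh)

lemma gridFloor_lt_of_lt_gridCeil (hh : 0 < h) (huv : gridFloor h u < gridCeil h v) :
    gridFloor h u < v :=
  lt_of_not_ge fun hvu => huv.not_ge (gridCeil_le hh hvu)

lemma eventually_gridFloor_nhdsGE (hh : 0 < h) (u : ℝ) :
    ∀ᶠ v in 𝓝[≥] u, gridFloor h v = gridFloor h u := by
  filter_upwards [Ico_mem_nhdsGE (lt_gridFloor_add (u := u) hh)] with v hv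
  exact gridFloor_eq hh ⟨(gridFloor_le hh).trans hv.1, hv.2⟩

lemma eventually_gridFloor_nhdsLT (hh : 0 < h) (u : ℝ) :
    ∀ᶠ v in 𝓝[<] u, gridFloor h v = h * (⌈u / h⌉ - 1 : ℤ) := by
  have hk : h * (⌈u / h⌉ - 1 : ℤ) = gridCeil h u - h := by
    push_cast
    rw [gridCeil]
    ring
  have hlt : h * (⌈u / h⌉ - 1 : ℤ) < u := by linarith [gridCeil_lt_add (u := u) hh]
  filter_upwards [Ico_mem_nhdsLT hlt] with v hv
  exact gridFloor_eq hh ⟨hv.1, hv.2.trans_le (by linarith [le_gridCeil (u := u) hh])⟩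

end Grid

section Discretize

variable {E : Type*} [NormedAddCommGroup E] {c h t s : ℝ} {x : E}

noncomputable def truncate (c : ℝ) (x : E) : E := if ‖x‖ ≤ c then x else 0

lemma norm_truncate_le_norm : ‖truncate c x‖ ≤ ‖x‖ := by
  unfold truncate; split_ifs <;> simp

lemma norm_truncate_le (hc : 0 ≤ c) : ‖truncate c x‖ ≤ c := by
  unfold truncate; split_ifs with hx
  · exact hx
  · simpa using hc

lemma truncate_of_norm_le (hx : ‖x‖ ≤ c) : truncate c x = x := if_pos hx

lemma measurable_truncate [MeasurableSpace E] [OpensMeasurableSpace E] :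
    Measurable (truncate c : E → E) :=
  Measurable.ite (measurableSet_le measurable_norm measurable_const) measurable_id
    measurable_const

noncomputable def discretize (h c t : ℝ) (ξ : ℝ → E) (s : ℝ) : E :=
  if s < t then truncate c (ξ (gridFloor h s)) else ξ s

lemma discretize_of_lt (ξ : ℝ → E) (hs : s < t) :
    discretize h c t ξ s = truncate c (ξ (gridFloor h s)) := if_pos hs

lemma discretize_of_le (ξ : ℝ → E) (hs : t ≤ s) : discretize h c t ξ s = ξ s :=
  if_neg hs.not_gt

lemma discretize_congr (hh : 0 < h) {T : ℝ} {ξ ξ' : ℝ → E} (hξ : EqOn ξ ξ' (Icc 0 T))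
    (hs : s ∈ Icc 0 T) : discretize h c t ξ s = discretize h c t ξ' s := by
  rcases lt_or_ge s t with hst | hst
  · rw [discretize_of_lt ξ hst, discretize_of_lt ξ' hst,
      hξ ⟨gridFloor_nonneg hh hs.1, (gridFloor_le hh).trans hs.2⟩]
  · rw [discretize_of_le ξ hst, discretize_of_le ξ' hst, hξ hs]

lemma norm_discretize_lt (hh : 0 < h) {T R : ℝ} {ξ : ℝ → E} (hR : ∀ u ∈ Icc 0 T, ‖ξ u‖ < R)
    (hs : s ∈ Icc 0 T) : ‖discretize h c t ξ s‖ < R := by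
  rcases lt_or_ge s t with hst | hst
  · rw [discretize_of_lt ξ hst]
    exact norm_truncate_le_norm.trans_lt
      (hR _ ⟨gridFloor_nonneg hh hs.1, (gridFloor_le hh).trans hs.2⟩)
  · rw [discretize_of_le ξ hst]
    exact hR s hs

lemma isCadlag_discretize {ξ : ℝ → E} (hξ : IsCadlag ξ) (hh : 0 < h) :
    IsCadlag (discretize h c t ξ) := by
  refine ⟨fun s hs => ?_, fun s hs => ?_⟩
  · rcases lt_or_ge s t with hst | hst
    · refine tendsto_const_nhds.congr' ?_
      filter_upwards [eventually_gridFloor_nhdsGE hh s, Ico_mem_nhdsGE hst] with u hu hut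
      rw [discretize_of_lt ξ hst, discretize_of_lt ξ hut.2, hu]
    · refine (hξ.1 s hs).congr (fun u hu => discretize_of_le ξ (hst.trans hu))
        (discretize_of_le ξ hst)
  · have hle : 𝓝[Ico 0 s] s ≤ 𝓝[<] s := nhdsWithin_mono _ Ico_subset_Iio_self
    rcases le_or_gt s t with hst | hst
    · refine ⟨truncate c (ξ (h * (⌈s / h⌉ - 1 : ℤ))), tendsto_const_nhds.congr' ?_⟩
      filter_upwards [hle (eventually_gridFloor_nhdsLT hh s), hle self_mem_nhdsWithin]
        with u hu hus
      rw [discretize_of_lt ξ (lt_of_lt_of_le hus hst), hu]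
    · obtain ⟨l, hl⟩ := hξ.2 s hs
      refine ⟨l, hl.congr' ?_⟩
      filter_upwards [hle (Ioo_mem_nhdsLT hst)] with u hu
      rw [discretize_of_le ξ hu.1.le]

end Discretize

structure TimePartition (t : ℝ) where
  len : ℕ
  node : ℕ → ℝ
  node_lt_node_succ : ∀ i < len, node i < node (i + 1)
  node_zero : node 0 = 0
  node_len : node len = t

namespace TimePartition

variable {t s : ℝ} (p : TimePartition t)

lemma node_le_node {i j : ℕ} (hij : i ≤ j) (hj : j ≤ p.len) : p.node i ≤ p.node j :=
  (strictMonoOn_Iic_of_lt_succ fun i hi => by simpa using p.node_lt_node_succ i hi).monotoneOn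
    (mem_Iic.2 (hij.trans hj)) (mem_Iic.2 hj) hij

lemma node_nonneg {i : ℕ} (hi : i ≤ p.len) : 0 ≤ p.node i :=
  p.node_zero ▸ p.node_le_node (Nat.zero_le i) hi

lemma node_le {i : ℕ} (hi : i ≤ p.len) : p.node i ≤ t :=
  (p.node_le_node hi le_rfl).trans_eq p.node_len

lemma nonneg (p : TimePartition t) : 0 ≤ t := p.node_len ▸ p.node_nonneg le_rfl

lemma exists_mem_Ico (hs : s ∈ Ico 0 t) :
    ∃ j < p.len, s ∈ Ico (p.node j) (p.node (j + 1)) := by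
  classical
  set j := Nat.findGreatest (fun j => p.node j ≤ s) p.len
  have hj : p.node j ≤ s :=
    Nat.findGreatest_spec (P := fun j => p.node j ≤ s) (Nat.zero_le _) (p.node_zero ▸ hs.1)
  have hjlen : j < p.len := by
    refine (Nat.findGreatest_le p.len).lt_of_ne fun hj' => hs.2.not_ge ?_
    rw [← p.node_len, ← hj']
    exact hj
  exact ⟨j, hjlen, hj, lt_of_not_ge fun h =>
    Nat.findGreatest_is_greatest (Nat.lt_succ_self j) hjlen h⟩

def zero : TimePartition 0 := ⟨0, fun _ => 0, fun _ h => absurd h (Nat.not_lt_zero _), rfl, rfl⟩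

def snoc {t' : ℝ} (htt' : t < t') : TimePartition t' where
  len := p.len + 1
  node i := if i ≤ p.len then p.node i else t'
  node_lt_node_succ i hi := by
    rcases (Nat.lt_succ_iff.1 hi).lt_or_eq with hi | rfl
    · simpa [hi.le, Nat.succ_le_of_lt hi] using p.node_lt_node_succ i hi
    · simpa [p.node_len] using htt'
  node_zero := by simp only [Nat.zero_le, if_true, p.node_zero]
  node_len := by simp only [Nat.not_succ_le_self, if_false]

lemma snoc_node {t' : ℝ} (htt' : t < t') (i : ℕ) :
    (p.snoc htt').node i = if i ≤ p.len then p.node i else t' := rfl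

section Oscillation

variable {E : Type*} [PseudoMetricSpace E]

def OscLE (ξ : ℝ → E) (ε : ℝ) : Prop :=
  ∀ i < p.len, ∀ v ∈ Ico (p.node i) (p.node (i + 1)), dist (ξ v) (ξ (p.node i)) ≤ ε

variable {p} {ξ : ℝ → E} {ε : ℝ}

lemma OscLE.snoc (hp : p.OscLE ξ ε) {t' : ℝ} (htt' : t < t')
    (hξ : ∀ v ∈ Ico t t', dist (ξ v) (ξ t) ≤ ε) : (p.snoc htt').OscLE ξ ε := by
  intro i hi v hv
  rcases (Nat.lt_succ_iff.1 hi).lt_or_eq with hi | rfl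
  · simp only [snoc_node, hi.le, Nat.succ_le_of_lt hi, if_true] at hv ⊢
    exact hp i hi v hv
  · simp only [snoc_node, le_rfl, if_true, Nat.not_succ_le_self, if_false, p.node_len] at hv ⊢
    exact hξ v hv

end Oscillation

end TimePartition

section Cadlag

variable {E : Type*} [PseudoMetricSpace E] {ξ : ℝ → E} {c t ε : ℝ}

lemma IsCadlag.eventually_dist_le_nhdsLT (hξ : IsCadlag ξ) (hc : 0 < c) (hε : 0 < ε) :
    ∀ᶠ u in 𝓝[<] c, ∀ v ∈ Ico u c, dist (ξ v) (ξ u) ≤ ε := by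
  obtain ⟨l, hl⟩ := hξ.2 c hc
  rw [nhdsWithin_Ico_eq_nhdsLT hc] at hl
  obtain ⟨a, ha, hsub⟩ :=
    mem_nhdsLT_iff_exists_Ioo_subset.1 (hl (Metric.ball_mem_nhds l (half_pos hε)))
  filter_upwards [Ioo_mem_nhdsLT ha] with u hu v hv
  have hv' : dist (ξ v) l < ε / 2 := hsub ⟨hu.1.trans_le hv.1, hv.2⟩
  have hu' : dist (ξ u) l < ε / 2 := hsub hu
  linarith [dist_triangle_right (ξ v) (ξ u) l]

lemma IsCadlag.eventually_dist_le_nhdsGT (hξ : IsCadlag ξ) (hc : 0 ≤ c) (hε : 0 < ε) :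
    ∀ᶠ u in 𝓝[>] c, ∀ v ∈ Ico c u, dist (ξ v) (ξ c) ≤ ε := by
  obtain ⟨b, hb, hsub⟩ :=
    mem_nhdsGE_iff_exists_Ico_subset.1 (hξ.1 c hc (Metric.ball_mem_nhds (ξ c) hε))
  filter_upwards [Ioc_mem_nhdsGT hb] with u hu v hv
  exact le_of_lt (hsub ⟨hv.1, hv.2.trans_le hu.2⟩)

/-- The supremum of the times up to which an `ε`-oscillation partition exists is attained
(left limits) and cannot lie before `t` (right continuity). -/
lemma IsCadlag.exists_timePartition_oscLE (hξ : IsCadlag ξ) (ht : 0 ≤ t) (hε : 0 < ε) :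
    ∃ p : TimePartition t, p.OscLE ξ ε := by
  set A := {u | u ≤ t ∧ ∃ p : TimePartition u, p.OscLE ξ ε}
  have h0A : (0 : ℝ) ∈ A :=
    ⟨ht, TimePartition.zero, fun _ hi => absurd hi (Nat.not_lt_zero _)⟩
  have hbdd : BddAbove A := ⟨t, fun _ hu => hu.1⟩
  have hct : sSup A ≤ t := csSup_le ⟨0, h0A⟩ fun _ hu => hu.1
  have hc0 : 0 ≤ sSup A := le_csSup hbdd h0A
  have hcA : ∃ p : TimePartition (sSup A), p.OscLE ξ ε := by
    rcases hc0.eq_or_lt with hc0 | hc0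
    · exact hc0 ▸ h0A.2
    obtain ⟨a, ha, hsub⟩ :=
      mem_nhdsLT_iff_exists_Ioo_subset.1 (hξ.eventually_dist_le_nhdsLT hc0 hε)
    obtain ⟨u, huA, hau⟩ := exists_lt_of_lt_csSup ⟨0, h0A⟩ ha
    obtain ⟨p, hp⟩ := huA.2
    rcases (le_csSup hbdd huA).lt_or_eq with huc | huc
    · exact ⟨p.snoc huc, hp.snoc huc (hsub ⟨hau, huc⟩)⟩
    · exact huc ▸ ⟨p, hp⟩
  have hc : sSup A = t := by
    refine hct.antisymm (not_lt.1 fun hlt => ?_)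
    obtain ⟨u, ⟨hu, hut⟩, hcu⟩ := ((hξ.eventually_dist_le_nhdsGT hc0 hε).and
      (Ioc_mem_nhdsGT hlt)).and self_mem_nhdsWithin |>.exists
    obtain ⟨p, hp⟩ := hcA
    exact (le_csSup hbdd ⟨hut.2, p.snoc hcu, hp.snoc hcu hu⟩).not_gt hcu
  exact hc ▸ hcA

lemma IsCadlag.isBounded_image_Icc (hξ : IsCadlag ξ) (t : ℝ) :
    Bornology.IsBounded (ξ '' Icc 0 t) := by
  rcases lt_or_ge t 0 with ht | ht
  · simp [Icc_eq_empty_of_lt ht]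
  obtain ⟨p, hp⟩ := hξ.exists_timePartition_oscLE ht one_pos
  refine ((Bornology.isBounded_biUnion_finset (Finset.range (p.len + 1))
    (f := fun i => Metric.closedBall (ξ (p.node i)) 1)).2
    fun i _ => Metric.isBounded_closedBall).subset ?_
  rintro _ ⟨s, hs, rfl⟩
  simp only [mem_iUnion, Finset.mem_range, Metric.mem_closedBall]
  rcases hs.2.lt_or_eq with hst | rfl
  · obtain ⟨j, hj, hsj⟩ := p.exists_mem_Ico ⟨hs.1, hst⟩
    exact ⟨j, by omega, hp j hj s hsj⟩
  · exact ⟨p.len, by omega, by simp [p.node_len]⟩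

end Cadlag

def IsTimeChange (g : ℝ → ℝ) : Prop :=
  ContinuousOn g (Ici 0) ∧ StrictMonoOn g (Ici 0) ∧ g '' Ici 0 = Ici 0

lemma isTimeChange_id : IsTimeChange id :=
  ⟨continuousOn_id, fun _ _ _ _ h => h, image_id _⟩

lemma isTimeChange_of_strictMono {g : ℝ → ℝ} (hc : Continuous g) (hm : StrictMono g)
    (h0 : g 0 = 0) (hsurj : Function.Surjective g) : IsTimeChange g := by
  refine ⟨hc.continuousOn, hm.strictMonoOn _, subset_antisymm ?_ fun y hy => ?_⟩
  · rintro _ ⟨x, hx, rfl⟩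
    exact h0 ▸ hm.monotone hx
  · obtain ⟨x, rfl⟩ := hsurj y
    exact ⟨x, hm.le_iff_le.1 (by rw [h0]; exact hy), rfl⟩

namespace TimePartition

variable {t s : ℝ} (p q : TimePartition t)

/-- The piecewise linear map sending `p.node i` to `q.node i`, extended by the identity outside
`[0, t]`: the `i`-th summand is the ramp climbing from `0` to `q.node (i+1) - q.node i` on the
`i`-th cell of `p`. -/
noncomputable def interp (s : ℝ) : ℝ :=
  min s 0 + max (s - t) 0 + ∑ i ∈ Finset.range p.len,
    (q.node (i + 1) - q.node i) / (p.node (i + 1) - p.node i) *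
      max (min s (p.node (i + 1)) - p.node i) 0

lemma continuous_interp : Continuous (p.interp q) := by
  unfold interp
  fun_prop

variable {p q}

lemma interp_summand_of_le {i : ℕ} (hi : i < p.len) (hs : p.node (i + 1) ≤ s) :
    (q.node (i + 1) - q.node i) / (p.node (i + 1) - p.node i) *
      max (min s (p.node (i + 1)) - p.node i) 0 = q.node (i + 1) - q.node i := by
  have := p.node_lt_node_succ i hi
  rw [min_eq_right hs, max_eq_left (by linarith), div_mul_cancel₀ _ (by linarith)]

lemma interp_summand_of_ge {i : ℕ} (hs : s ≤ p.node i) :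
    (q.node (i + 1) - q.node i) / (p.node (i + 1) - p.node i) *
      max (min s (p.node (i + 1)) - p.node i) 0 = 0 := by
  rw [max_eq_right (by linarith [min_le_left s (p.node (i + 1))]), mul_zero]

lemma interp_of_nonpos (hs : s ≤ 0) : p.interp q s = s := by
  rw [interp, min_eq_left hs, max_eq_right (by linarith [p.nonneg]),
    Finset.sum_eq_zero fun i hi => interp_summand_of_ge
      (hs.trans (p.node_nonneg (Finset.mem_range.1 hi).le))]
  ring

lemma interp_of_le (hlen : q.len = p.len) (hs : t ≤ s) : p.interp q s = s := by
  rw [interp, min_eq_right (p.nonneg.trans hs), max_eq_left (by linarith),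
    Finset.sum_congr rfl fun i hi => interp_summand_of_le (Finset.mem_range.1 hi)
      ((p.node_le (Finset.mem_range.1 hi)).trans hs),
    Finset.sum_range_sub (fun i => q.node i), ← hlen, q.node_len, q.node_zero]
  ring

lemma interp_eq {j : ℕ} (hj : j < p.len) (hs : s ∈ Icc (p.node j) (p.node (j + 1))) :
    p.interp q s = q.node j +
      (q.node (j + 1) - q.node j) / (p.node (j + 1) - p.node j) * (s - p.node j) := by
  have hs0 : 0 ≤ s := (p.node_nonneg hj.le).trans hs.1
  have hst : s ≤ t := hs.2.trans (p.node_le hj)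
  rw [interp, min_eq_right hs0, max_eq_right (by linarith),
    ← Finset.sum_range_add_sum_Ico _ (Nat.succ_le_of_lt hj), Finset.sum_range_succ,
    Finset.sum_congr rfl fun i hi => interp_summand_of_le ((Finset.mem_range.1 hi).trans hj)
      ((p.node_le_node (Finset.mem_range.1 hi) hj.le).trans hs.1),
    Finset.sum_eq_zero fun i hi => interp_summand_of_ge
      (hs.2.trans (p.node_le_node (Finset.mem_Ico.1 hi).1 (Finset.mem_Ico.1 hi).2.le)),
    Finset.sum_range_sub (fun i => q.node i), q.node_zero, min_eq_left hs.2,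
    max_eq_left (sub_nonneg.2 hs.1)]
  ring

lemma interp_node (hlen : q.len = p.len) {j : ℕ} (hj : j ≤ p.len) :
    p.interp q (p.node j) = q.node j := by
  rcases hj.lt_or_eq with hj | rfl
  · rw [interp_eq hj ⟨le_rfl, (p.node_lt_node_succ j hj).le⟩]
    ring
  · rw [interp_of_le hlen p.node_len.ge, p.node_len, ← hlen, q.node_len]

lemma strictMonoOn_interp_Icc {j : ℕ} (hj : j < p.len) (hq : q.node j < q.node (j + 1)) :
    StrictMonoOn (p.interp q) (Icc (p.node j) (p.node (j + 1))) := by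
  intro x hx y hy hxy
  have hslope : 0 < (q.node (j + 1) - q.node j) / (p.node (j + 1) - p.node j) :=
    div_pos (by linarith) (by linarith [p.node_lt_node_succ j hj])
  rw [interp_eq hj hx, interp_eq hj hy]
  have := mul_lt_mul_of_pos_left (sub_lt_sub_right hxy (p.node j)) hslope
  linarith

lemma strictMono_interp (hlen : q.len = p.len) : StrictMono (p.interp q) := by
  have hIic : ∀ j ≤ p.len, StrictMonoOn (p.interp q) (Iic (p.node j)) := by
    intro j hj
    induction j with
    | zero =>
      rw [p.node_zero]
      intro x hx y hy hxy
      rwa [interp_of_nonpos hx, interp_of_nonpos hy]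
    | succ j ih =>
      have hj : j < p.len := hj
      have hstep := p.node_lt_node_succ j hj
      rw [← Iic_union_Icc_eq_Iic hstep.le]
      exact (ih hj.le).union (strictMonoOn_interp_Icc hj (q.node_lt_node_succ j (hlen ▸ hj)))
        isGreatest_Iic (isLeast_Icc hstep.le)
  have hIic_t := hIic p.len le_rfl
  rw [p.node_len] at hIic_t
  refine StrictMonoOn.Iic_union_Ici (a := t) hIic_t ?_
  intro x hx y hy hxy
  rwa [interp_of_le hlen hx, interp_of_le hlen hy]

lemma interp_sub_self_mem (hlen : q.len = p.len) {S : Set ℝ} (hS : Convex ℝ S)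
    (h0 : (0 : ℝ) ∈ S) (hnode : ∀ i ≤ p.len, q.node i - p.node i ∈ S) : p.interp q s - s ∈ S := by
  rcases le_or_gt s 0 with hs | hs
  · rwa [interp_of_nonpos hs, sub_self]
  rcases le_or_gt t s with hst | hst
  · rwa [interp_of_le hlen hst, sub_self]
  obtain ⟨j, hj, hsj⟩ := p.exists_mem_Ico ⟨hs.le, hst⟩
  have hgap : 0 < p.node (j + 1) - p.node j := by linarith [p.node_lt_node_succ j hj]
  set θ := (s - p.node j) / (p.node (j + 1) - p.node j) with hθ
  have hθ0 : 0 ≤ θ := div_nonneg (by linarith [hsj.1]) hgap.le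
  have hθ1 : θ ≤ 1 := (div_le_one hgap).2 (by linarith [hsj.2])
  have hconv : p.interp q s - s =
      (1 - θ) • (q.node j - p.node j) + θ • (q.node (j + 1) - p.node (j + 1)) := by
    rw [interp_eq hj (Ico_subset_Icc_self hsj), smul_eq_mul, smul_eq_mul, hθ]
    field_simp
    ring
  rw [hconv]
  exact hS (hnode j hj.le) (hnode (j + 1) hj) (by linarith) hθ0 (by ring)

lemma isTimeChange_interp (hlen : q.len = p.len) : IsTimeChange (p.interp q) :=
  isTimeChange_of_strictMono (p.continuous_interp q) (strictMono_interp hlen)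
    (interp_of_nonpos le_rfl)
    ((p.continuous_interp q).surjective
      (tendsto_id.congr' ((eventually_ge_atTop t).mono fun _ hs => (interp_of_le hlen hs).symm))
      (tendsto_id.congr' ((eventually_le_atBot 0).mono fun _ hs => (interp_of_nonpos hs).symm)))

variable {h : ℝ}

noncomputable def ceilToGrid (p : TimePartition t) (hh : 0 < h) {k : ℕ} (hk : h * k = t)
    (hgap : ∀ i < p.len, h ≤ p.node (i + 1) - p.node i) : TimePartition t where
  len := p.len
  node i := gridCeil h (p.node i)
  node_lt_node_succ i hi := by
    linarith [gridCeil_lt_add (u := p.node i) hh, le_gridCeil (u := p.node (i + 1)) hh,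
      hgap i hi]
  node_zero := by simpa [p.node_zero] using gridCeil_mul_intCast hh 0
  node_len := by simpa [p.node_len, ← hk] using gridCeil_mul_intCast hh k

lemma exists_isTimeChange_gridFloor_mem_Ico (p : TimePartition t) (hh : 0 < h) {k : ℕ}
    (hk : h * k = t) (hgap : ∀ i < p.len, h ≤ p.node (i + 1) - p.node i) :
    ∃ g : ℝ → ℝ, IsTimeChange g ∧ (∀ s, g s - s ∈ Ico 0 h) ∧ (∀ s, t ≤ s → g s = s) ∧
      ∀ j < p.len, ∀ s ∈ Ico (p.node j) (p.node (j + 1)),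
        g s < t ∧ gridFloor h (g s) ∈ Ico (p.node j) (p.node (j + 1)) := by
  set q := p.ceilToGrid hh hk hgap
  have hlen : q.len = p.len := rfl
  refine ⟨p.interp q, isTimeChange_interp hlen,
    fun s => interp_sub_self_mem hlen (convex_Ico 0 h) ⟨le_rfl, hh⟩ fun i _ =>
      ⟨sub_nonneg.2 (le_gridCeil hh), sub_lt_iff_lt_add'.2 (gridCeil_lt_add hh)⟩,
    fun s hs => interp_of_le hlen hs, fun j hj s hs => ?_⟩
  have hlt : p.interp q s < q.node (j + 1) :=
    interp_node hlen (j := j + 1) hj ▸ strictMono_interp hlen hs.2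
  have hge : q.node j ≤ p.interp q s :=
    interp_node hlen (j := j) hj.le ▸ (strictMono_interp hlen).monotone hs.1
  refine ⟨hlt.trans_le (q.node_le hj), (le_gridCeil hh).trans (le_gridFloor hh hge),
    gridFloor_lt_of_lt_gridCeil hh ((gridFloor_le hh).trans_lt hlt)⟩

end TimePartition

lemma exists_seq_forall_eventually {α : Type*} [Nonempty α] {p : ℕ → ℕ → α → Prop}
    (hp : ∀ n x, Antitone fun k => p n k x) (h : ∀ k, ∀ᶠ n in atTop, ∃ x, p n k x) :
    ∃ x : ℕ → α, ∀ k, ∀ᶠ n in atTop, p n k (x n) := by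
  classical
  let K n := Nat.findGreatest (fun k => ∃ x, p n k x) n
  refine ⟨fun n => if hn : ∃ x, p n (K n) x then hn.choose else Classical.arbitrary α,
    fun k => ?_⟩
  filter_upwards [h k, eventually_ge_atTop k] with n hn hkn
  have hex : ∃ x, p n (K n) x := Nat.findGreatest_spec (P := fun k => ∃ x, p n k x) hkn hn
  rw [dif_pos hex]
  exact hp n _ (Nat.le_findGreatest hkn hn) hex.choose_spec

lemma skTendsto_of_eventually {N : ℕ} {ξn : ℕ → ℝ → Fin N → ℝ} {ξ : ℝ → Fin N → ℝ}
    (h : ∀ ε > 0, ∀ᶠ n in atTop, ∃ g, IsTimeChange g ∧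
      ∀ s, 0 ≤ s → dist s (g s) < ε ∧ dist (ξ s) (ξn n (g s)) < ε) :
    SkTendsto ξn ξ := by
  have : Nonempty {g // IsTimeChange g} := ⟨⟨id, isTimeChange_id⟩⟩
  obtain ⟨g, hg⟩ := exists_seq_forall_eventually
    (p := fun n k (g : {g // IsTimeChange g}) => ∀ s, 0 ≤ s →
      dist s (g.1 s) < 1 / (k + 1) ∧ dist (ξ s) (ξn n (g.1 s)) < 1 / (k + 1))
    (fun n g k k' hkk' H s hs => by
      have : 1 / ((k' : ℝ) + 1) ≤ 1 / ((k : ℝ) + 1) :=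
        one_div_le_one_div_of_le (by positivity) (by exact_mod_cast Nat.succ_le_succ hkk')
      exact ⟨(H s hs).1.trans_le this, (H s hs).2.trans_le this⟩)
    (fun k => (h _ Nat.one_div_pos_of_nat).mono fun n ⟨g, hg, hgs⟩ => ⟨⟨g, hg⟩, hgs⟩)
  have hlim : ∀ ε > 0, ∀ᶠ n in atTop, ∀ s, 0 ≤ s →
      dist s ((g n).1 s) < ε ∧ dist (ξ s) (ξn n ((g n).1 s)) < ε := fun ε hε => by
    obtain ⟨k, hk⟩ := exists_nat_one_div_lt hε
    filter_upwards [hg k] with n hn s hs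
    exact ⟨(hn s hs).1.trans hk, (hn s hs).2.trans hk⟩
  refine ⟨fun n => (g n).1, fun n => (g n).2, Metric.tendstoUniformlyOn_iff.2 fun ε hε => ?_,
    fun T _ => Metric.tendstoUniformlyOn_iff.2 fun ε hε => ?_⟩
  · filter_upwards [hlim ε hε] with n hn s hs using (hn s hs).1
  · filter_upwards [hlim ε hε] with n hn s hs using (hn s hs.1).2

lemma IsCadlag.eventually_exists_isTimeChange_dist_discretize_lt {E : Type*}
    [NormedAddCommGroup E] {ξ : ℝ → E} (hξ : IsCadlag ξ) {t ε : ℝ} (ht : 0 < t) (hε : 0 < ε) :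
    ∀ᶠ n : ℕ in atTop, ∃ g, IsTimeChange g ∧ ∀ s, 0 ≤ s →
      dist s (g s) < ε ∧ dist (ξ s) (discretize (t / 2 ^ n) n t ξ (g s)) < ε := by
  obtain ⟨p, hp⟩ := hξ.exists_timePartition_oscLE ht.le (by positivity : 0 < ε / 3)
  obtain ⟨C, hC⟩ := isBounded_iff_forall_norm_le.1 (hξ.isBounded_image_Icc t)
  have hmesh : Tendsto (fun n : ℕ => t / 2 ^ n) atTop (𝓝 0) :=
    tendsto_const_nhds.div_atTop (tendsto_pow_atTop_atTop_of_one_lt one_lt_two)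
  filter_upwards [hmesh.eventually (eventually_lt_nhds hε),
    (eventually_all_finite (finite_lt_nat p.len)).2 fun i hi =>
      hmesh.eventually (eventually_le_nhds (sub_pos.2 (p.node_lt_node_succ i hi))),
    eventually_ge_atTop ⌈C⌉₊] with n hnε hngap hnC
  obtain ⟨g, hg, hshift, hfix, hcell⟩ :=
    p.exists_isTimeChange_gridFloor_mem_Ico (by positivity) (k := 2 ^ n)
      (by push_cast; field_simp) hngap
  refine ⟨g, hg, fun s hs => ⟨?_, ?_⟩⟩
  · rw [Real.dist_eq, abs_sub_lt_iff]
    constructor <;> linarith [(hshift s).1, (hshift s).2]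
  rcases lt_or_ge s t with hst | hst
  · obtain ⟨j, hj, hsj⟩ := p.exists_mem_Ico ⟨hs, hst⟩
    obtain ⟨hgt, hu⟩ := hcell j hj s hsj
    set u := gridFloor (t / 2 ^ n) (g s)
    have hu_mem : u ∈ Icc 0 t :=
      ⟨(p.node_nonneg hj.le).trans hu.1, hu.2.le.trans (p.node_le hj)⟩
    rw [discretize_of_lt ξ hgt, truncate_of_norm_le
      ((hC _ (mem_image_of_mem ξ hu_mem)).trans (Nat.ceil_le.1 hnC))]
    calc dist (ξ s) (ξ u) ≤ dist (ξ s) (ξ (p.node j)) + dist (ξ u) (ξ (p.node j)) :=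
          dist_triangle_right _ _ _
      _ ≤ ε / 3 + ε / 3 := add_le_add (hp j hj s hsj) (hp j hj u hu)
      _ < ε := by linarith
  · rw [hfix s hst, discretize_of_le ξ hst, dist_self]
    exact hε

lemma IsCadlag.comp_min_const {E : Type*} [TopologicalSpace E] {ω : ℝ → E} (hω : IsCadlag ω)
    {θ : ℝ} (hθ : 0 ≤ θ) : IsCadlag fun u => ω (min u θ) := by
  refine ⟨fun u hu => ?_, fun u hu => ?_⟩
  · exact ContinuousWithinAt.comp (f := fun v => min v θ) (hω.1 _ (le_min hu hθ))
      (continuous_id.min continuous_const).continuousWithinAt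
      fun v (hv : u ≤ v) => min_le_min_right θ hv
  rcases le_or_gt u θ with huθ | huθ
  · obtain ⟨l, hl⟩ := hω.2 u hu
    refine ⟨l, hl.congr' ?_⟩
    filter_upwards [self_mem_nhdsWithin] with v hv
    rw [min_eq_left (hv.2.le.trans huθ)]
  · refine ⟨ω θ, tendsto_const_nhds.congr' ?_⟩
    filter_upwards [nhdsWithin_mono _ Ico_subset_Iio_self (Ioo_mem_nhdsLT huθ)] with v hv
    rw [min_eq_right hv.1.le]

section Control

variable {M N : ℕ} {P : (Fin M → ℝ) → Measure (PathD M)} {Ξ : PathD M → PathR N}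

def stopD (θ : ℝ) (hθ : 0 ≤ θ) (ω : PathD M) : PathD M :=
  ⟨fun u => ω.1 (min u θ), ω.2.comp_min_const hθ⟩

lemma measurable_stopD (θ : ℝ) (hθ : 0 ≤ θ) :
    Measurable[Ft M θ] (stopD θ hθ : PathD M → PathD M) := by
  refine @measurable_generateFrom _ _ (Ft M θ) _ _ ?_
  rintro _ ⟨u, hu, j, rfl⟩
  exact MeasurableSpace.measurableSet_generateFrom
    ⟨min u θ, le_min hu hθ, min_le_right _ _, j, rfl⟩

lemma measurable_eval_pathR {v : ℝ} (hv : 0 ≤ v) : Measurable fun ξ : PathR N => ξ.1 v :=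
  fun _ hB => MeasurableSpace.measurableSet_generateFrom ⟨v, hv, _, hB, rfl⟩

lemma measurable_pathR_of_eval {α : Type*} [MeasurableSpace α] {F : α → PathR N}
    (hF : ∀ v, 0 ≤ v → Measurable fun a => (F a).1 v) : Measurable F :=
  measurable_generateFrom fun _ ⟨v, hv, _, hB, hS⟩ => hS ▸ hF v hv hB

/-- A path of `D` is constant just after `θ`, so it agrees with its stopped path on some
`[0, T]` with `T > θ`, where nonanticipation applies. -/
lemma IsControl.apply_stopD (hΞ : IsControl P Ξ) {θ : ℝ} (hθ : 0 ≤ θ) (ω : PathD M) :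
    (Ξ (stopD θ hθ ω)).1 θ = (Ξ ω).1 θ := by
  obtain ⟨b, hθb, hb⟩ := mem_nhdsGE_iff_exists_Ico_subset.1
    (ω.2.1 θ hθ ((isOpen_discrete {ω.1 θ}).mem_nhds rfl))
  have hθb : θ < b := hθb
  have hagree : ∀ u ∈ Icc 0 ((θ + b) / 2), (stopD θ hθ ω).1 u = ω.1 u := by
    intro u hu
    rcases le_or_gt u θ with huθ | huθ
    · exact congrArg ω.1 (min_eq_left huθ)
    · exact (congrArg ω.1 (min_eq_right huθ.le)).trans
        (hb ⟨huθ.le, by linarith [hu.2]⟩ : ω.1 u = ω.1 θ).symm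
  exact hΞ.2.2 _ (by linarith) _ ω hagree θ ⟨hθ, by linarith⟩

lemma IsControl.measurable_apply_Ft (hΞ : IsControl P Ξ) {θ : ℝ} (hθ : 0 ≤ θ) :
    Measurable[Ft M θ] fun ω => (Ξ ω).1 θ := by
  have : (fun ω => (Ξ ω).1 θ) = (fun ξ : PathR N => ξ.1 θ) ∘ Ξ ∘ stopD θ hθ :=
    funext fun ω => (hΞ.apply_stopD hθ ω).symm
  rw [this]
  exact (measurable_eval_pathR hθ).comp (hΞ.1.comp (measurable_stopD θ hθ))

noncomputable def discretizeControl (Ξ : PathD M → PathR N) {h : ℝ} (hh : 0 < h) (c t : ℝ)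
    (ω : PathD M) : PathR N :=
  ⟨discretize h c t (Ξ ω).1, isCadlag_discretize (Ξ ω).2 hh⟩

lemma ASurely.norm_discretizeControl_lt {T R : ℝ}
    (hbd : ASurely P fun ω => ∀ s ∈ Icc 0 T, ‖(Ξ ω).1 s‖ < R) {h : ℝ} (hh : 0 < h) (c t : ℝ) :
    ASurely P fun ω => ∀ s ∈ Icc 0 T, ‖(discretizeControl Ξ hh c t ω).1 s‖ < R :=
  fun a ha hpos => (hbd a ha hpos).mono fun _ hω _ hs => norm_discretize_lt hh hω hs

lemma isControl_discretizeControl (hΞ : IsControl P Ξ) {h : ℝ} (hh : 0 < h) (c t : ℝ) :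
    IsControl P (discretizeControl Ξ hh c t) := by
  refine ⟨measurable_pathR_of_eval fun v hv => ?_, fun T hT => ?_,
    fun T hT ω₁ ω₂ hω s hs => discretize_congr hh (fun u hu => hΞ.2.2 T hT ω₁ ω₂ hω u hu) hs⟩
  · rcases lt_or_ge v t with hvt | hvt
    · simp only [discretizeControl, discretize_of_lt _ hvt]
      exact measurable_truncate.comp ((measurable_eval_pathR (gridFloor_nonneg hh hv)).comp hΞ.1)
    · simp only [discretizeControl, discretize_of_le _ hvt]
      exact (measurable_eval_pathR hv).comp hΞ.1
  · obtain ⟨R, hR, hbd⟩ := hΞ.2.1 T hT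
    exact ⟨R, hR, hbd.norm_discretizeControl_lt hh c t⟩

lemma piecewiseConstControl_discretizeControl (hΞ : IsControl P Ξ) {h : ℝ} (hh : 0 < h)
    {c : ℝ} (hc : 0 ≤ c) {t : ℝ} {k : ℕ} (hk : h * k = t) :
    PiecewiseConstControl (discretizeControl Ξ hh c t) t := by
  refine ⟨k, fun i => i * h, fun i j hij => mul_lt_mul_of_pos_right (by exact_mod_cast hij) hh,
    by simp, by simp [mul_comm, hk], fun i ω => truncate c ((Ξ ω).1 (i * h)),
    fun i => ⟨?_, c, fun ω => norm_truncate_le hc⟩, fun ω i r hr => ?_⟩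
  · exact measurable_truncate.comp (hΞ.measurable_apply_Ft (by positivity))
  · simp only [Fin.val_castSucc, Fin.val_succ, Nat.cast_succ] at hr
    have hrt : r < t :=
      calc r < (i + 1) * h := hr.2
        _ ≤ k * h := mul_le_mul_of_nonneg_right (by exact_mod_cast i.isLt) hh.le
        _ = t := by rw [mul_comm, hk]
    change discretize h c t (Ξ ω).1 r = truncate c ((Ξ ω).1 (i * h))
    rw [discretize_of_lt _ hrt, gridFloor_eq hh (k := i)]
    · push_cast
      rw [mul_comm]
    · push_cast
      constructor <;> linarith [hr.1, hr.2]

end Control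

theorem stmt4_general {M N : ℕ}
    (P : (Fin M → ℝ) → MeasureTheory.Measure (PathD M))
    (Ξ : PathD M → PathR N) (hΞ : IsControl P Ξ) (t : ℝ) (ht : 0 < t) :
    ∃ Ξn : ℕ → PathD M → PathR N,
      (∀ n, IsControl P (Ξn n) ∧ PiecewiseConstControl (Ξn n) t) ∧
      (∀ T : ℝ, 0 < T → ∃ R : ℝ, 0 < R ∧
        ∀ n, ASurely P fun ω => ∀ s ∈ Set.Icc (0 : ℝ) T, ‖(Ξn n ω).1 s‖ < R) ∧
      (∀ ω : PathD M, SkTendsto (fun n => (Ξn n ω).1) ((Ξ ω).1)) := by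
  have hh : ∀ n : ℕ, 0 < t / 2 ^ n := fun n => by positivity
  refine ⟨fun n => discretizeControl Ξ (hh n) n t, fun n =>
    ⟨isControl_discretizeControl hΞ (hh n) n t,
      piecewiseConstControl_discretizeControl hΞ (hh n) n.cast_nonneg (k := 2 ^ n)
        (by push_cast; field_simp)⟩,
    fun T hT => ?_, fun ω => skTendsto_of_eventually fun ε hε =>
      (Ξ ω).2.eventually_exists_isTimeChange_dist_discretize_lt ht hε⟩
  obtain ⟨R, hR, hbd⟩ := hΞ.2.1 T hT
  exact ⟨R, hR, fun n => hbd.norm_discretizeControl_lt (hh n) n t⟩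

/-- Any control can be approximated, pointwise in the Skorohod sense and
locally uniformly boundedly, by controls piecewise constant in `[0,t]`. -/
theorem stmt4 {M N : ℕ} (Λ : Matrix (Fin M) (Fin M) ℝ) (hΛ : CouplingOK Λ)
    (P : (Fin M → ℝ) → MeasureTheory.Measure (PathD M)) (hP : PFamily Λ P)
    (Ξ : PathD M → PathR N) (hΞ : IsControl P Ξ) (t : ℝ) (ht : 0 < t) :
    ∃ Ξn : ℕ → PathD M → PathR N,
      (∀ n, IsControl P (Ξn n) ∧ PiecewiseConstControl (Ξn n) t) ∧
      (∀ T : ℝ, 0 < T → ∃ R : ℝ, 0 < R ∧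
        ∀ n, ASurely P fun ω => ∀ s ∈ Set.Icc (0 : ℝ) T, ‖(Ξn n ω).1 s‖ < R) ∧
      (∀ ω : PathD M, SkTendsto (fun n => (Ξn n ω).1) ((Ξ ω).1)) :=
  stmt4_general P Ξ hΞ t ht
end
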